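/- (Hadamard shape semiderivative of a domain integral.) Fix n ∈ ℕ, let Ω ⊆ ℝⁿ be a Lebesgue measurable set, and let V : ℝⁿ → ℝⁿ be continuously differentiable and globally Lipschitz with Lipschitz constant L > 0; set F_t(x) = x + t·V(x), so that F_t is injective for 0 ≤ t < 1/L and det(DF_t(x)) = det(I + t·DV(x)) > 0 on Ω for such t. Let (g_t)_{t≥0} be a family of Lebesgue measurable functions ℝⁿ → ℝ with g_0 integrable on Ω. Assume: (a) for almost every x ∈ Ω the Hadamard material semiderivative D_{Hm}g(x) = lim_{t→0⁺} (g_t(F_t(x)) − g_0(x))/t exists; (b) there exist δ ∈ (0, 1/L) and an integrable function G on Ω with |g_t(F_t(x))·det(I + t·DV(x)) − g_0(x)| ≤ t·G(x) for almost every x ∈ Ω and all t ∈ (0, δ]. Then lim_{t→0⁺} (1/t)·(∫_{F_t(Ω)} g_t(y) dy − ∫_Ω g_0(x) dx) = ∫_Ω (D_{Hm}g(x) + div V(x)·g_0(x)) dx, where F_t(Ω) denotes the image of Ω under F_t and div V = Σ_{i=1}^n ∂_i V_i. -/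

import Mathlib

open Filter Topology MeasureTheory Set

/-! Changing variables `y = x + t • V x` turns the difference quotient into
`∫_Ω (g_t(F_t x) · det(I + t DV x) − g_0 x) / t`, and hypothesis (b) lets dominated convergence
pass to the limit under the integral. Pointwise, the limit is the right derivative at `t = 0` of
the product `g_t(F_t x) · det(I + t DV x)`; the first factor contributes the material derivative
and the second `d/dt det(I + t A)|_{t=0} = tr A`, which for `A = DV x` is `div V x`. -/

theorem Matrix.hasDerivAt_det_one_add_smul {𝕜 ι : Type*} [NontriviallyNormedField 𝕜]
    [Fintype ι] [DecidableEq ι] (M : Matrix ι ι 𝕜) :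
    HasDerivAt (fun t : 𝕜 => (1 + t • M).det) M.trace 0 := by
  set p := (Matrix.det (1 + (Polynomial.X : Polynomial 𝕜) • M.map Polynomial.C)).divX.divX
  have hexp : (fun t : 𝕜 => (1 + t • M).det) = fun t => 1 + M.trace * t + p.eval t * t ^ 2 :=
    funext fun t => M.det_one_add_smul t
  rw [hexp]
  simpa using (((hasDerivAt_id' (0 : 𝕜)).const_mul M.trace).const_add 1).fun_add
    ((p.hasDerivAt 0).fun_mul (hasDerivAt_pow 2 (0 : 𝕜)))

theorem LinearMap.hasDerivAt_det_id_add_smul {𝕜 E : Type*} [NontriviallyNormedField 𝕜]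
    [AddCommGroup E] [Module 𝕜 E] [FiniteDimensional 𝕜 E] (A : E →ₗ[𝕜] E) :
    HasDerivAt (fun t : 𝕜 => LinearMap.det (LinearMap.id + t • A))
      (LinearMap.trace 𝕜 E A) 0 := by
  let b := Module.finBasis 𝕜 E
  simp_rw [← LinearMap.det_toMatrix b, map_add, map_smul, LinearMap.toMatrix_id,
    LinearMap.trace_eq_matrix_trace 𝕜 b]
  exact Matrix.hasDerivAt_det_one_add_smul _

theorem LinearMap.trace_eq_sum_apply_single {R ι : Type*} [CommRing R] [Fintype ι]
    [DecidableEq ι] (f : (ι → R) →ₗ[R] ι → R) :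
    LinearMap.trace R _ f = ∑ i, f (Pi.single i 1) i := by
  simp [LinearMap.trace_eq_matrix_trace R (Pi.basisFun R ι), Matrix.trace]

theorem hasDerivWithinAt_Ioi_zero_iff {f : ℝ → ℝ} {f' : ℝ} :
    HasDerivWithinAt f f' (Ioi 0) 0 ↔ Tendsto (fun t => (f t - f 0) / t) (𝓝[>] 0) (𝓝 f') := by
  rw [hasDerivWithinAt_iff_tendsto_slope' self_notMem_Ioi]
  simp only [slope_fun_def_field, sub_zero]

theorem tendsto_div_mul_det_id_add_smul {E : Type*} [AddCommGroup E] [Module ℝ E]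
    [FiniteDimensional ℝ E] (A : E →ₗ[ℝ] E) {φ : ℝ → ℝ} {D : ℝ}
    (hφ : Tendsto (fun t => (φ t - φ 0) / t) (𝓝[>] 0) (𝓝 D)) :
    Tendsto (fun t => (φ t * LinearMap.det (LinearMap.id + t • A) - φ 0) / t) (𝓝[>] 0)
      (𝓝 (D + LinearMap.trace ℝ E A * φ 0)) := by
  have := (hasDerivWithinAt_Ioi_zero_iff.2 hφ).mul A.hasDerivAt_det_id_add_smul.hasDerivWithinAt
  rw [hasDerivWithinAt_Ioi_zero_iff] at this
  simpa [mul_comm] using this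

section JacobianDeterminant

variable {E : Type*} [NormedAddCommGroup E] [NormedSpace ℝ E]

theorem ContinuousLinearMap.det_id_add_smul (A : E →L[ℝ] E) (t : ℝ) :
    (ContinuousLinearMap.id ℝ E + t • A).det =
      LinearMap.det (LinearMap.id + t • (A : E →ₗ[ℝ] E)) :=
  rfl

theorem continuous_det_id_add_smul_fderiv {V : E → E} (hV : ContDiff ℝ 1 V) (t : ℝ) :
    Continuous fun x => LinearMap.det (LinearMap.id + t • (fderiv ℝ V x : E →ₗ[ℝ] E)) := by
  simp only [← ContinuousLinearMap.det_id_add_smul]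
  exact ContinuousLinearMap.continuous_det.comp
    (continuous_const.add ((hV.continuous_fderiv one_ne_zero).const_smul t))

theorem integral_image_id_add_smul [FiniteDimensional ℝ E] [MeasurableSpace E] [BorelSpace E]
    (μ : Measure E) [μ.IsAddHaarMeasure] {s : Set E} (hs : MeasurableSet s) {V : E → E}
    (hV : Differentiable ℝ V) {t : ℝ} (hinj : InjOn (fun x => x + t • V x) s)
    (hdet : ∀ x ∈ s, 0 < LinearMap.det (LinearMap.id + t • (fderiv ℝ V x : E →ₗ[ℝ] E)))
    (f : E → ℝ) :
    ∫ y in (fun x => x + t • V x) '' s, f y ∂μ =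
      ∫ x in s, f (x + t • V x) *
        LinearMap.det (LinearMap.id + t • (fderiv ℝ V x : E →ₗ[ℝ] E)) ∂μ := by
  have hF : ∀ x ∈ s, HasFDerivWithinAt (fun x => x + t • V x)
      (ContinuousLinearMap.id ℝ E + t • fderiv ℝ V x) s x := fun x _ =>
    ((hasFDerivAt_id x).add ((hV x).hasFDerivAt.const_smul t)).hasFDerivWithinAt
  rw [integral_image_eq_integral_abs_det_fderiv_smul μ hs hF hinj]
  refine setIntegral_congr_fun hs fun x hx => ?_
  rw [smul_eq_mul, mul_comm, ContinuousLinearMap.det_id_add_smul, abs_of_pos (hdet x hx)]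

end JacobianDeterminant

theorem tendsto_integral_sub_div_of_dominated {α : Type*} [MeasurableSpace α] {μ : Measure α}
    {f : ℝ → α → ℝ} {f₀ G D : α → ℝ} (hf : ∀ᶠ t in 𝓝[>] 0, AEStronglyMeasurable (f t) μ)
    (hf₀ : Integrable f₀ μ) (hG : Integrable G μ)
    (hbound : ∀ᶠ t in 𝓝[>] 0, ∀ᵐ x ∂μ, |f t x - f₀ x| ≤ t * G x)
    (hlim : ∀ᵐ x ∂μ, Tendsto (fun t => (f t x - f₀ x) / t) (𝓝[>] 0) (𝓝 (D x))) :
    Tendsto (fun t => (∫ x, f t x ∂μ - ∫ x, f₀ x ∂μ) / t) (𝓝[>] 0) (𝓝 (∫ x, D x ∂μ)) := by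
  have hpos : ∀ᶠ t : ℝ in 𝓝[>] 0, 0 < t := self_mem_nhdsWithin
  have hint : ∀ᶠ t in 𝓝[>] 0, Integrable (f t) μ := by
    filter_upwards [hf, hbound] with t hft hbt
    have hsub : Integrable (fun x => f t x - f₀ x) μ :=
      (hG.const_mul t).mono' (hft.fun_sub hf₀.1) (by simpa only [Real.norm_eq_abs] using hbt)
    simpa using hsub.fun_add hf₀
  have hquot : Tendsto (fun t => ∫ x, (f t x - f₀ x) / t ∂μ) (𝓝[>] 0) (𝓝 (∫ x, D x ∂μ)) := by
    refine tendsto_integral_filter_of_dominated_convergence G ?_ ?_ hG hlim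
    · filter_upwards [hf] with t hft
      exact ((hft.aemeasurable.sub hf₀.aemeasurable).div_const t).aestronglyMeasurable
    · filter_upwards [hbound, hpos] with t hbt ht
      filter_upwards [hbt] with x hx
      rwa [Real.norm_eq_abs, abs_div, abs_of_pos ht, div_le_iff₀ ht, mul_comm]
  refine hquot.congr' ?_
  filter_upwards [hint] with t ht
  rw [integral_div, integral_sub ht hf₀]

theorem hadamard_shape_semideriv_domain_integral_general
    (n : ℕ) (Ω : Set (Fin n → ℝ)) (hΩ : MeasurableSet Ω)
    (V : (Fin n → ℝ) → (Fin n → ℝ)) (hV : ContDiff ℝ 1 V)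
    (L : NNReal)
    -- `F_t = id + t·V` is injective for `0 ≤ t < 1/L` ...
    (hinj : ∀ t : ℝ, 0 ≤ t → t < 1 / (L : ℝ) →
      Function.Injective (fun x : Fin n → ℝ => x + t • V x))
    -- ... and `det(I + t·DV(x)) > 0` on `Ω` for such `t`
    (hdet : ∀ t : ℝ, 0 ≤ t → t < 1 / (L : ℝ) → ∀ x ∈ Ω,
      0 < LinearMap.det
        (LinearMap.id + t • ((fderiv ℝ V x : (Fin n → ℝ) →L[ℝ] (Fin n → ℝ))
          : (Fin n → ℝ) →ₗ[ℝ] (Fin n → ℝ))))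
    (g : ℝ → (Fin n → ℝ) → ℝ) (hmeas : ∀ t : ℝ, Measurable (g t))
    (hint : IntegrableOn (g 0) Ω)
    (Dmg : (Fin n → ℝ) → ℝ)
    -- (a) the material semiderivative exists almost everywhere on `Ω`
    (ha : ∀ᵐ x ∂(volume.restrict Ω),
      Tendsto (fun t => (g t (x + t • V x) - g 0 x) / t) (𝓝[>] (0 : ℝ)) (𝓝 (Dmg x)))
    -- (b) a uniform integrable bound for the transported difference quotients
    (δ : ℝ) (hδ0 : 0 < δ) (hδL : δ < 1 / (L : ℝ))
    (G : (Fin n → ℝ) → ℝ) (hG : IntegrableOn G Ω)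
    (hbound : ∀ t ∈ Set.Ioc (0 : ℝ) δ, ∀ᵐ x ∂(volume.restrict Ω),
      |g t (x + t • V x) * LinearMap.det
          (LinearMap.id + t • ((fderiv ℝ V x : (Fin n → ℝ) →L[ℝ] (Fin n → ℝ))
            : (Fin n → ℝ) →ₗ[ℝ] (Fin n → ℝ)))
        - g 0 x| ≤ t * G x) :
    Tendsto
      (fun t => ((∫ y in (fun x : Fin n → ℝ => x + t • V x) '' Ω, g t y)
        - ∫ x in Ω, g 0 x) / t)
      (𝓝[>] (0 : ℝ))
      (𝓝 (∫ x in Ω, (Dmg x + (∑ i, fderiv ℝ V x (Pi.single i 1) i) * g 0 x))) := by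
  have hsmall : Ioc 0 δ ∈ 𝓝[>] (0 : ℝ) := Ioc_mem_nhdsGT hδ0
  have hmeas_transport : ∀ t : ℝ, Measurable fun x => g t (x + t • V x) := fun t =>
    (hmeas t).comp (continuous_id.add (hV.continuous.const_smul t)).measurable
  have hlim : ∀ᵐ x ∂(volume.restrict Ω),
      Tendsto (fun t => (g t (x + t • V x) * LinearMap.det (LinearMap.id + t •
          ((fderiv ℝ V x : (Fin n → ℝ) →L[ℝ] (Fin n → ℝ)) : (Fin n → ℝ) →ₗ[ℝ] (Fin n → ℝ)))
          - g 0 x) / t)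
        (𝓝[>] 0) (𝓝 (Dmg x + (∑ i, fderiv ℝ V x (Pi.single i 1) i) * g 0 x)) := by
    filter_upwards [ha] with x hx
    simpa [LinearMap.trace_eq_sum_apply_single] using
      tendsto_div_mul_det_id_add_smul (fderiv ℝ V x : (Fin n → ℝ) →ₗ[ℝ] (Fin n → ℝ))
        (φ := fun t => g t (x + t • V x)) (by simpa using hx)
  refine (tendsto_integral_sub_div_of_dominated
    (Eventually.of_forall fun t => ((hmeas_transport t).fun_mul
      (continuous_det_id_add_smul_fderiv hV t).measurable).aestronglyMeasurable)
    hint hG (eventually_of_mem hsmall hbound) hlim).congr' ?_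
  filter_upwards [hsmall] with t ht
  have htL : t < 1 / (L : ℝ) := ht.2.trans_lt hδL
  rw [integral_image_id_add_smul volume hΩ (hV.differentiable one_ne_zero)
    (hinj t ht.1.le htL).injOn (hdet t ht.1.le htL)]

/-- Hadamard shape semiderivative of a domain integral:
`lim_{t→0⁺} (1/t)(∫_{F_t(Ω)} g_t − ∫_Ω g_0) = ∫_Ω (D_{Hm}g + div V · g_0)`. -/
theorem hadamard_shape_semideriv_domain_integral
    (n : ℕ) (Ω : Set (Fin n → ℝ)) (hΩ : MeasurableSet Ω)
    (V : (Fin n → ℝ) → (Fin n → ℝ)) (hV : ContDiff ℝ 1 V)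
    (L : NNReal) (hL : 0 < L) (hLip : LipschitzWith L V)
    -- `F_t = id + t·V` is injective for `0 ≤ t < 1/L` ...
    (hinj : ∀ t : ℝ, 0 ≤ t → t < 1 / (L : ℝ) →
      Function.Injective (fun x : Fin n → ℝ => x + t • V x))
    -- ... and `det(I + t·DV(x)) > 0` on `Ω` for such `t`
    (hdet : ∀ t : ℝ, 0 ≤ t → t < 1 / (L : ℝ) → ∀ x ∈ Ω,
      0 < LinearMap.det
        (LinearMap.id + t • ((fderiv ℝ V x : (Fin n → ℝ) →L[ℝ] (Fin n → ℝ))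
          : (Fin n → ℝ) →ₗ[ℝ] (Fin n → ℝ))))
    (g : ℝ → (Fin n → ℝ) → ℝ) (hmeas : ∀ t : ℝ, Measurable (g t))
    (hint : IntegrableOn (g 0) Ω)
    (Dmg : (Fin n → ℝ) → ℝ)
    -- (a) the material semiderivative exists almost everywhere on `Ω`
    (ha : ∀ᵐ x ∂(volume.restrict Ω),
      Tendsto (fun t => (g t (x + t • V x) - g 0 x) / t) (𝓝[>] (0 : ℝ)) (𝓝 (Dmg x)))
    -- (b) a uniform integrable bound for the transported difference quotients
    (δ : ℝ) (hδ0 : 0 < δ) (hδL : δ < 1 / (L : ℝ))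
    (G : (Fin n → ℝ) → ℝ) (hG : IntegrableOn G Ω)
    (hbound : ∀ t ∈ Set.Ioc (0 : ℝ) δ, ∀ᵐ x ∂(volume.restrict Ω),
      |g t (x + t • V x) * LinearMap.det
          (LinearMap.id + t • ((fderiv ℝ V x : (Fin n → ℝ) →L[ℝ] (Fin n → ℝ))
            : (Fin n → ℝ) →ₗ[ℝ] (Fin n → ℝ)))
        - g 0 x| ≤ t * G x) :
    Tendsto
      (fun t => ((∫ y in (fun x : Fin n → ℝ => x + t • V x) '' Ω, g t y)
        - ∫ x in Ω, g 0 x) / t)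
      (𝓝[>] (0 : ℝ))
      (𝓝 (∫ x in Ω, (Dmg x + (∑ i, fderiv ℝ V x (Pi.single i 1) i) * g 0 x))) :=
  hadamard_shape_semideriv_domain_integral_general n Ω hΩ V hV L hinj hdet g hmeas hint Dmg ha δ hδ0
    hδL G hG hbound
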